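/- arXiv:2601.20028 — 2 statements merged into one kernel-verified Lean document; each statement's English description precedes it below -/
import Mathlib

section
/- Suppose z_x, z_y ∈ R^p are nonnegative with disjoint supports, W has unit-norm columns, W z_x = x, W z_y = y, and ⟨x,y⟩ > c > 0. Let i ∈ supp(z_x), j ∈ supp(z_y) satisfy ⟨w_i, w_j⟩ ≥ c/(‖z_x‖₁‖z_y‖₁). Replacing the component z_{y,j} w_j by its expansion along w_i and the orthogonal unit residual w̃ yields sparse codes z̃_x, z̃_y (in the dictionary augmented by w̃) with ⟨z̃_x, z̃_y⟩ = z_{x,i} z_{y,j} ⟨w_i, w_j⟩ ≥ c·z_{x,i}z_{y,j}/(‖z_x‖₁‖z_y‖₁) > 0. -/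
open Finset RealInnerProductSpace

theorem stmt_9 (d p : ℕ) (x y : EuclideanSpace ℝ (Fin d))
    (W : Fin p → EuclideanSpace ℝ (Fin d)) (zx zy : Fin p → ℝ) (c : ℝ)
    (i j : Fin p)
    (hx1 : ‖x‖ = 1) (hy1 : ‖y‖ = 1) (hc : 0 < c) (hxy : c < ⟪x, y⟫)
    (hWunit : ∀ k, ‖W k‖ = 1)
    (hzx0 : ∀ k, 0 ≤ zx k) (hzy0 : ∀ k, 0 ≤ zy k)
    (hdisj : ∀ k, zx k = 0 ∨ zy k = 0)
    (hWx : x = ∑ k, zx k • W k) (hWy : y = ∑ k, zy k • W k)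
    (hi : zx i ≠ 0) (hj : zy j ≠ 0)
    (hij : c / ((∑ k, zx k) * (∑ k, zy k)) ≤ ⟪W i, W j⟫)
    (hlt1 : ⟪W i, W j⟫ < 1) :
    let wt := (‖W j - ⟪W i, W j⟫ • W i‖)⁻¹ • (W j - ⟪W i, W j⟫ • W i)
    let zx' : Fin (p + 1) → ℝ := Fin.snoc zx 0
    let zy' : Fin (p + 1) → ℝ :=
      Fin.snoc (fun k => if k = i then zy j * ⟪W i, W j⟫
                         else if k = j then 0 else zy k)
        (zy j * ‖W j - ⟪W i, W j⟫ • W i‖)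
    x = ∑ k, zx' k • (Fin.snoc W wt) k ∧
    y = ∑ k, zy' k • (Fin.snoc W wt) k ∧
    (∑ k, zx' k * zy' k) = zx i * zy j * ⟪W i, W j⟫ ∧
    c * (zx i * zy j) / ((∑ k, zx k) * (∑ k, zy k)) ≤ ∑ k, zx' k * zy' k ∧
    0 < ∑ k, zx' k * zy' k := by
  intro wt zx' zy'
  have hzyi : zy i = 0 := (hdisj i).resolve_left hi
  have hzxj : zx j = 0 := (hdisj j).resolve_right hj
  have hne : i ≠ j := by rintro rfl; exact hj hzyi
  have hxi : 0 < zx i := lt_of_le_of_ne (hzx0 i) (Ne.symm hi)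
  have hyj : 0 < zy j := lt_of_le_of_ne (hzy0 j) (Ne.symm hj)
  have hSx : 0 < ∑ k, zx k :=
    Finset.sum_pos' (fun k _ => hzx0 k) ⟨i, Finset.mem_univ i, hxi⟩
  have hSy : 0 < ∑ k, zy k :=
    Finset.sum_pos' (fun k _ => hzy0 k) ⟨j, Finset.mem_univ j, hyj⟩
  have hpos : 0 < ⟪W i, W j⟫ := lt_of_lt_of_le (div_pos hc (mul_pos hSx hSy)) hij
  have hr0 : W j - ⟪W i, W j⟫ • W i ≠ 0 := by
    intro h
    have hWj : W j = ⟪W i, W j⟫ • W i := by rwa [sub_eq_zero] at h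
    have habs : ‖W j‖ = ‖⟪W i, W j⟫ • W i‖ := by rw [← hWj]
    rw [norm_smul, hWunit i, hWunit j, mul_one, Real.norm_eq_abs,
      abs_of_pos hpos] at habs
    linarith
  have hrn : ‖W j - ⟪W i, W j⟫ • W i‖ ≠ 0 := norm_ne_zero_iff.mpr hr0
  have hwt : (zy j * ‖W j - ⟪W i, W j⟫ • W i‖) • wt
      = zy j • (W j - ⟪W i, W j⟫ • W i) := by
    show (zy j * ‖W j - ⟪W i, W j⟫ • W i‖) •
        ((‖W j - ⟪W i, W j⟫ • W i‖)⁻¹ • (W j - ⟪W i, W j⟫ • W i)) = _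
    rw [smul_smul, mul_assoc, mul_inv_cancel₀ hrn, mul_one]
  have h1 : x = ∑ k, zx' k • (Fin.snoc W wt) k := by
    rw [Fin.sum_univ_castSucc]
    simp [zx', Fin.snoc_castSucc, Fin.snoc_last, hWx]
  have h2 : y = ∑ k, zy' k • (Fin.snoc W wt) k := by
    rw [Fin.sum_univ_castSucc]
    simp only [zy', Fin.snoc_castSucc, Fin.snoc_last]
    rw [hwt]
    have key : ∑ k : Fin p,
        (if k = i then zy j * ⟪W i, W j⟫ else if k = j then 0 else zy k) • W k
        = (∑ k, zy k • W k)
          + ((zy j * ⟪W i, W j⟫) • W i - zy j • W j) := by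
      have hpt : ∀ k : Fin p,
          (if k = i then zy j * ⟪W i, W j⟫ else if k = j then 0 else zy k) • W k
          = zy k • W k + ((if k = i then (zy j * ⟪W i, W j⟫) • W i else 0)
              - (if k = j then zy j • W j else 0)) := by
        intro k
        by_cases hki : k = i
        · subst hki; simp [hne, hzyi]
        · by_cases hkj : k = j
          · subst hkj; simp [hki]
          · simp [hki, hkj]
      rw [Finset.sum_congr rfl (fun k _ => hpt k), Finset.sum_add_distrib,
        Finset.sum_sub_distrib]
      simp [Finset.sum_ite_eq']
    rw [key, hWy, smul_sub, smul_smul]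
    abel
  have h3 : (∑ k, zx' k * zy' k) = zx i * zy j * ⟪W i, W j⟫ := by
    rw [Fin.sum_univ_castSucc]
    simp only [zx', zy', Fin.snoc_castSucc, Fin.snoc_last, zero_mul, add_zero]
    rw [Finset.sum_eq_single i]
    · simp [mul_assoc]
    · intro k _ hki
      by_cases hkj : k = j
      · subst hkj; simp [hki]
      · simp only [if_neg hki, if_neg hkj]
        rcases hdisj k with h | h <;> simp [h]
    · intro h; exact absurd (Finset.mem_univ i) h
  refine ⟨h1, h2, h3, ?_, ?_⟩
  · rw [h3]
    calc c * (zx i * zy j) / ((∑ k, zx k) * (∑ k, zy k))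
        = (zx i * zy j) * (c / ((∑ k, zx k) * (∑ k, zy k))) := by ring
      _ ≤ (zx i * zy j) * ⟪W i, W j⟫ :=
          mul_le_mul_of_nonneg_left hij (le_of_lt (mul_pos hxi hyj))
      _ = zx i * zy j * ⟪W i, W j⟫ := by ring
  · rw [h3]; exact mul_pos (mul_pos hxi hyj) hpos
end

section
/- Suppose x, y are unit vectors with ⟨x,y⟩ > c > 0, x = W z_x, y = W z_y with z_x, z_y nonnegative and having disjoint supports, and W has unit-norm columns. Then ‖z_x‖₁ · ‖z_y‖₁ > c; in particular both ‖z_x‖₁ and ‖z_y‖₁ are strictly positive. -/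
open Finset RealInnerProductSpace

theorem stmt_13 (d p : ℕ) (x y : EuclideanSpace ℝ (Fin d))
    (W : Fin p → EuclideanSpace ℝ (Fin d)) (zx zy : Fin p → ℝ) (c : ℝ)
    (hx1 : ‖x‖ = 1) (hy1 : ‖y‖ = 1) (hc : 0 < c) (hxy : c < ⟪x, y⟫)
    (hW : ∀ k, ‖W k‖ = 1)
    (hzx0 : ∀ k, 0 ≤ zx k) (hzy0 : ∀ k, 0 ≤ zy k)
    (hdisj : ∀ k, zx k = 0 ∨ zy k = 0)
    (hWx : x = ∑ k, zx k • W k) (hWy : y = ∑ k, zy k • W k) :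
    c < (∑ k, zx k) * (∑ k, zy k) ∧ 0 < ∑ k, zx k ∧ 0 < ∑ k, zy k := by
  have hexp : ⟪x, y⟫ = ∑ j, ∑ k, zx j * (zy k * ⟪W j, W k⟫) := by
    rw [hWx, hWy, sum_inner]
    refine Finset.sum_congr rfl fun j _ => ?_
    rw [real_inner_smul_left, inner_sum, Finset.mul_sum]
    exact Finset.sum_congr rfl fun k _ => by rw [real_inner_smul_right]
  have hle : ⟪x, y⟫ ≤ (∑ k, zx k) * (∑ k, zy k) := by
    rw [hexp, Finset.sum_mul_sum]
    refine Finset.sum_le_sum fun j _ => Finset.sum_le_sum fun k _ => ?_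
    have h1 : ⟪W j, W k⟫ ≤ 1 := by
      have := real_inner_le_norm (W j) (W k)
      rwa [hW j, hW k, one_mul] at this
    have := mul_le_mul_of_nonneg_left (mul_le_mul_of_nonneg_left h1 (hzy0 k))
      (hzx0 j)
    simpa using this
  have hmain : c < (∑ k, zx k) * (∑ k, zy k) := lt_of_lt_of_le hxy hle
  refine ⟨hmain, ?_, ?_⟩
  · rcases lt_or_eq_of_le (Finset.sum_nonneg fun k _ => hzx0 k) with h | h
    · exact h
    · rw [← h, zero_mul] at hmain; linarith
  · rcases lt_or_eq_of_le (Finset.sum_nonneg fun k _ => hzy0 k) with h | h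
    · exact h
    · rw [← h, mul_zero] at hmain; linarith
end
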